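/- arXiv:1911.06132 — 2 statements merged into one kernel-verified Lean document; each statement's English description precedes it below -/
import Mathlib

section
/- Let n ≥ 1, let w : Fin n → Fin n → EReal have all entries in {−1, 0, 1, ⊤}, and let w_c be a canonical graph of w with d_{w_c}(p,q) = d_w(p,q) for all p,q; write d = d_{w_c} and t*(p,q) = halve(d(p,q)). Fix i, j with d(i,j) finite (an integer). Then min over k ∈ Fin n of max(t*(i,k), x⁻(k,j)) equals t*(i,j) if and only if d(i,j) is odd and there exists a shortest walk from i to j under w_c whose last edge has weight −1. -/
open scoped BigOperators

namespace MinMaxAPSP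

/-- `p` is a walk from `i` to `j` with `ℓ` hops in the graph with weight matrix `w`
(an ordered pair is an edge iff its weight is not `⊤`). -/
def IsWalk {n : ℕ} (w : Fin n → Fin n → EReal) (i j : Fin n) (ℓ : ℕ)
    (p : Fin (ℓ+1) → Fin n) : Prop :=
  p 0 = i ∧ p (Fin.last ℓ) = j ∧ ∀ k : Fin ℓ, w (p k.castSucc) (p k.succ) ≠ ⊤

/-- The weight of a walk with `ℓ` hops. -/
noncomputable def walkWeight {n : ℕ} (w : Fin n → Fin n → EReal) (ℓ : ℕ)
    (p : Fin (ℓ+1) → Fin n) : EReal :=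
  ∑ k : Fin ℓ, w (p k.castSucc) (p k.succ)

/-- The distance from `i` to `j`: the infimum of the weights of all walks from `i` to `j`
(`⊤` if there is no walk). -/
noncomputable def dist {n : ℕ} (w : Fin n → Fin n → EReal) (i j : Fin n) : EReal :=
  sInf {x : EReal | ∃ ℓ, ∃ p : Fin (ℓ+1) → Fin n, IsWalk w i j ℓ p ∧ walkWeight w ℓ p = x}

/-- The infimum of the weights of all walks from `i` to `j` with at most `δ` hops
(`⊤` if there is no such walk). -/
noncomputable def distLE {n : ℕ} (w : Fin n → Fin n → EReal) (δ : ℕ) (i j : Fin n) : EReal :=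
  sInf {x : EReal | ∃ ℓ ≤ δ, ∃ p : Fin (ℓ+1) → Fin n, IsWalk w i j ℓ p ∧ walkWeight w ℓ p = x}

/-- `w` is `δ`-regular. -/
def IsRegular {n : ℕ} (w : Fin n → Fin n → EReal) (δ : ℕ) : Prop :=
  ∀ i j : Fin n,
    (dist w i j ≠ ⊥ → dist w i j = distLE w δ i j) ∧
    (dist w i j = ⊥ →
      ∃ ℓ ≤ δ, ∃ p : Fin (ℓ+1) → Fin n, IsWalk w i j ℓ p ∧ walkWeight w ℓ p < 0)

/-- All entries of `w` are in `{-1, 0, 1, ⊤}`. -/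
def EntriesInMinusOneZeroOneTop {n : ℕ} (w : Fin n → Fin n → EReal) : Prop :=
  ∀ i j, w i j = -1 ∨ w i j = 0 ∨ w i j = 1 ∨ w i j = ⊤

/-- `p` is a shortest walk from `i` to `j` under `w`. -/
def IsShortestWalk {n : ℕ} (w : Fin n → Fin n → EReal) (i j : Fin n) (ℓ : ℕ)
    (p : Fin (ℓ+1) → Fin n) : Prop :=
  IsWalk w i j ℓ p ∧ walkWeight w ℓ p = dist w i j

/-- `wc` is a canonical graph of `w`. -/
def IsCanonical {n : ℕ} (w wc : Fin n → Fin n → EReal) : Prop :=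
  EntriesInMinusOneZeroOneTop wc ∧
  ∀ (i j : Fin n) (ℓ : ℕ) (p : Fin (ℓ+1) → Fin n), IsShortestWalk w i j ℓ p →
    ∃ ℓ' ≤ ℓ, ∃ p' : Fin (ℓ'+1) → Fin n,
      IsShortestWalk wc i j ℓ' p' ∧
      walkWeight wc ℓ' p' = walkWeight w ℓ p ∧
      (ℓ' = 1 ∨ ∀ k : Fin ℓ', wc (p' k.castSucc) (p' k.succ) ≠ 0)

/-- `halve x = ⌈x/2⌉` for finite `x`, and `halve (⊥) = ⊥`, `halve (⊤) = ⊤`. -/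
noncomputable def halve (x : EReal) : EReal :=
  if x = ⊤ then ⊤ else if x = ⊥ then ⊥ else (((⌈x.toReal / 2⌉ : ℤ) : ℝ) : EReal)


/-! Auxiliary lemmas -/

lemma coe_sum' (s : Finset ℕ) (f : ℕ → ℝ) :
    ((∑ k ∈ s, f k : ℝ) : EReal) = ∑ k ∈ s, ((f k : ℝ) : EReal) :=
  map_sum (⟨⟨(Real.toEReal), EReal.coe_zero⟩, EReal.coe_add⟩ : ℝ →+ EReal) f s

lemma coe_sum_fin (m : ℕ) (f : Fin m → ℝ) :
    ((∑ k : Fin m, f k : ℝ) : EReal) = ∑ k : Fin m, ((f k : ℝ) : EReal) :=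
  map_sum (⟨⟨(Real.toEReal), EReal.coe_zero⟩, EReal.coe_add⟩ : ℝ →+ EReal) f Finset.univ

lemma exists_int_weight {n ℓ : ℕ} {w : Fin n → Fin n → EReal}
    (hw : EntriesInMinusOneZeroOneTop w) {i j : Fin n} {p : Fin (ℓ+1) → Fin n}
    (hp : IsWalk w i j ℓ p) : ∃ z : ℤ, walkWeight w ℓ p = ((z:ℝ):EReal) := by
  have h : ∀ k : Fin ℓ, ∃ z : ℤ, w (p k.castSucc) (p k.succ) = ((z:ℝ):EReal) := by
    intro k
    rcases hw (p k.castSucc) (p k.succ) with h|h|h|h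
    · exact ⟨-1, by rw [h]; push_cast; simp⟩
    · exact ⟨0, by rw [h]; norm_cast⟩
    · exact ⟨1, by rw [h]; norm_cast⟩
    · exact absurd h (hp.2.2 k)
  choose f hf using h
  refine ⟨∑ k, f k, ?_⟩
  rw [walkWeight]
  have : ((((∑ k, f k : ℤ)):ℝ):EReal) = ∑ k : Fin ℓ, (((f k : ℤ):ℝ):EReal) := by
    rw [show (((∑ k, f k : ℤ)):ℝ) = ∑ k, ((f k:ℤ):ℝ) by push_cast; ring]
    exact coe_sum_fin ℓ _
  rw [this]
  exact Finset.sum_congr rfl (fun k _ => hf k)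

lemma dist_le_walk {n ℓ : ℕ} (w : Fin n → Fin n → EReal) {i j : Fin n}
    {p : Fin (ℓ+1) → Fin n} (hp : IsWalk w i j ℓ p) :
    dist w i j ≤ walkWeight w ℓ p :=
  sInf_le ⟨ℓ, p, hp, rfl⟩

/-- attainment of the distance when finite -/
lemma dist_attained {n : ℕ} {w : Fin n → Fin n → EReal} (hw : EntriesInMinusOneZeroOneTop w)
    {i j : Fin n} (ht : dist w i j ≠ ⊤) (hb : dist w i j ≠ ⊥) :
    ∃ z : ℤ, dist w i j = ((z:ℝ):EReal) ∧
      ∃ ℓ, ∃ p : Fin (ℓ+1) → Fin n, IsWalk w i j ℓ p ∧ walkWeight w ℓ p = ((z:ℝ):EReal) := by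
  set S := {x : EReal | ∃ ℓ, ∃ p : Fin (ℓ+1) → Fin n, IsWalk w i j ℓ p ∧ walkWeight w ℓ p = x}
    with hS
  have hne : S.Nonempty := by
    by_contra hemp
    rw [Set.not_nonempty_iff_eq_empty] at hemp
    exact ht (by rw [dist, ← hS, hemp, sInf_empty])
  set r : ℝ := (dist w i j).toReal with hr
  have hdr : dist w i j = (r : EReal) := (EReal.coe_toReal ht hb).symm
  -- the set of integer values attained
  have key : ∀ x ∈ S, ∃ z : ℤ, x = ((z:ℝ):EReal) := by
    rintro x ⟨ℓ, p, hp, hx⟩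
    obtain ⟨z, hz⟩ := exists_int_weight hw hp
    exact ⟨z, hx ▸ hz⟩
  have hbdd : ∃ b : ℤ, ∀ z : ℤ, ((z:ℝ):EReal) ∈ S → b ≤ z := by
    refine ⟨⌈r⌉, fun z hz => ?_⟩
    have h1 : dist w i j ≤ ((z:ℝ):EReal) := sInf_le hz
    rw [hdr] at h1
    have : r ≤ (z:ℝ) := by exact_mod_cast h1
    exact Int.ceil_le.mpr this
  have hinh : ∃ z : ℤ, ((z:ℝ):EReal) ∈ S := by
    obtain ⟨x, hx⟩ := hne
    obtain ⟨z, hz⟩ := key x hx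
    exact ⟨z, hz ▸ hx⟩
  obtain ⟨z₀, hz₀S, hz₀min⟩ := Int.exists_least_of_bdd hbdd hinh
  have hle : dist w i j ≤ ((z₀:ℝ):EReal) := sInf_le hz₀S
  have hge : ((z₀:ℝ):EReal) ≤ dist w i j := by
    apply le_sInf
    intro x hx
    obtain ⟨z, hz⟩ := key x hx
    rw [hz]
    exact_mod_cast hz₀min z (hz ▸ hx)
  obtain ⟨ℓ, p, hp, hwp⟩ := hz₀S
  exact ⟨z₀, le_antisymm hle hge, ℓ, p, hp, hwp⟩

/-- extension of a walk by one edge -/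
lemma extend_walk {n ℓ : ℕ} {w : Fin n → Fin n → EReal} {i k j : Fin n}
    {p : Fin (ℓ+1) → Fin n} (hp : IsWalk w i k ℓ p) (he : w k j ≠ ⊤) :
    IsWalk w i j (ℓ+1) (Fin.snoc p j) ∧
    walkWeight w (ℓ+1) (Fin.snoc p j) = walkWeight w ℓ p + w k j ∧
    (Fin.snoc p j : Fin (ℓ+2) → Fin n) (Fin.last ℓ).castSucc = k := by
  set q : Fin (ℓ+2) → Fin n := Fin.snoc p j with hq
  have hqc : ∀ m : Fin (ℓ+1), q m.castSucc = p m := fun m => by simp [hq]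
  have hql : q (Fin.last (ℓ+1)) = j := by simp [hq]
  have hqk : q (Fin.last ℓ).castSucc = k := by rw [hqc, hp.2.1]
  have hedge : ∀ m : Fin (ℓ+1), w (q m.castSucc) (q m.succ) ≠ ⊤ := by
    intro m
    induction m using Fin.lastCases with
    | last =>
      rw [hqk, Fin.succ_last, hql]
      exact he
    | cast m' =>
      rw [hqc, Fin.succ_castSucc, hqc]
      exact hp.2.2 m'
  refine ⟨⟨?_, hql, hedge⟩, ?_, hqk⟩
  · rw [show (0 : Fin (ℓ+2)) = (0 : Fin (ℓ+1)).castSucc by simp, hqc]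
    exact hp.1
  · rw [walkWeight, Fin.sum_univ_castSucc]
    congr 1
    · rw [walkWeight]
      apply Finset.sum_congr rfl
      intro m _
      rw [hqc, Fin.succ_castSucc, hqc]
    · rw [hqk, Fin.succ_last, hql]

/-- prefix of a walk: remove the last edge -/
lemma prefix_walk {n ℓ : ℕ} {w : Fin n → Fin n → EReal} {i j : Fin n}
    {p : Fin (ℓ+2) → Fin n} (hp : IsWalk w i j (ℓ+1) p) :
    IsWalk w i (p (Fin.last ℓ).castSucc) ℓ (p ∘ Fin.castSucc) ∧
    walkWeight w (ℓ+1) p =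
      walkWeight w ℓ (p ∘ Fin.castSucc) + w (p (Fin.last ℓ).castSucc) (p (Fin.last (ℓ+1))) := by
  constructor
  · refine ⟨?_, rfl, ?_⟩
    · rw [Function.comp_apply, show ((0 : Fin (ℓ+1)).castSucc) = (0 : Fin (ℓ+2)) by simp]
      exact hp.1
    · intro m
      have := hp.2.2 m.castSucc
      rw [Fin.succ_castSucc] at this
      exact this
  · rw [walkWeight, walkWeight, Fin.sum_univ_castSucc, Fin.succ_last]
    congr 1

lemma ereal_coe_add_neg_one (y : ℤ) : ((y:ℝ):EReal) + (-1) = (((y-1:ℤ):ℝ):EReal) := by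
  push_cast
  simp [sub_eq_add_neg, EReal.coe_add, EReal.coe_neg]

lemma halve_coe (z : ℤ) : halve ((z:ℝ):EReal) = ((⌈(z:ℝ)/2⌉:ℝ):EReal) := by
  rw [halve, if_neg (by simp), if_neg (by simp)]
  norm_num

lemma ceil_half_mono {a b : ℤ} (h : a ≤ b) : ⌈((a:ℤ):ℝ)/2⌉ ≤ ⌈((b:ℤ):ℝ)/2⌉ := by
  apply Int.ceil_le_ceil
  gcongr

lemma ceil_half_odd (m : ℤ) : ⌈((2*m+1:ℤ):ℝ)/2⌉ = m+1 := by
  rw [Int.ceil_eq_iff] <;> push_cast <;> constructor <;> linarith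

lemma ceil_half_even (m : ℤ) : ⌈((2*m:ℤ):ℝ)/2⌉ = m := by
  rw [Int.ceil_eq_iff] <;> push_cast <;> constructor <;> linarith


lemma halve_top : halve (⊤ : EReal) = ⊤ := if_pos rfl
lemma halve_bot : halve (⊥ : EReal) = ⊥ := by rw [halve, if_neg (by simp), if_pos rfl]

lemma neg_one_ne_top : (-1 : EReal) ≠ ⊤ := by
  have h : (-1 : EReal) = ((-1:ℝ):EReal) := by rw [← EReal.coe_one, ← EReal.coe_neg]
  rw [h]
  exact EReal.coe_ne_top _

lemma dist_lower {n : ℕ} {wc : Fin n → Fin n → EReal} (hwc : EntriesInMinusOneZeroOneTop wc)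
    {i j k : Fin n} {z : ℤ} (hd : dist wc i j = ((z:ℝ):EReal)) (he : wc k j = -1) :
    dist wc i k ≠ ⊥ ∧
      (dist wc i k ≠ ⊤ → ∃ y : ℤ, dist wc i k = ((y:ℝ):EReal) ∧ z + 1 ≤ y) := by
  have hetop : wc k j ≠ ⊤ := by rw [he]; exact neg_one_ne_top
  -- basic step: each walk i → k of weight (y:ℝ) yields dist wc i j ≤ y - 1
  have step : ∀ (ℓ : ℕ) (p : Fin (ℓ+1) → Fin n) (y : ℤ), IsWalk wc i k ℓ p →
      walkWeight wc ℓ p = ((y:ℝ):EReal) → z ≤ y - 1 := by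
    intro ℓ p y hp hwp
    obtain ⟨hq, hqw, _⟩ := extend_walk hp hetop
    have h1 : dist wc i j ≤ (((y-1:ℤ):ℝ):EReal) := by
      have := dist_le_walk wc hq
      rwa [hqw, hwp, he, ereal_coe_add_neg_one] at this
    rw [hd] at h1
    exact_mod_cast h1
  constructor
  · intro hbot
    have hlt : dist wc i k < ((z:ℝ):EReal) := by
      rw [hbot]; exact bot_lt_iff_ne_bot.mpr (by simp)
    rw [dist] at hlt
    obtain ⟨x, hxS, hxlt⟩ := sInf_lt_iff.mp hlt
    obtain ⟨ℓ, p, hp, hwp⟩ := hxS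
    obtain ⟨y, hy⟩ := exists_int_weight hwc hp
    have hyz : (y:ℤ) < z := by
      rw [← hwp, hy] at hxlt
      exact_mod_cast hxlt
    have := step ℓ p y hp (by rw [hwp, ← hwp, hy])
    omega
  · intro htop
    have hbot : dist wc i k ≠ ⊥ := by
      intro hbot
      have hlt : dist wc i k < ((z:ℝ):EReal) := by
        rw [hbot]; exact bot_lt_iff_ne_bot.mpr (by simp)
      rw [dist] at hlt
      obtain ⟨x, hxS, hxlt⟩ := sInf_lt_iff.mp hlt
      obtain ⟨ℓ, p, hp, hwp⟩ := hxS
      obtain ⟨y, hy⟩ := exists_int_weight hwc hp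
      have hyz : (y:ℤ) < z := by
        rw [← hwp, hy] at hxlt
        exact_mod_cast hxlt
      have := step ℓ p y hp (by rw [hwp, ← hwp, hy])
      omega
    obtain ⟨y, hy, ℓ, p, hp, hwp⟩ := dist_attained hwc htop hbot
    have := step ℓ p y hp hwp
    exact ⟨y, hy, by omega⟩


/-- characterization of `z⁻ᵢⱼ = 1`. -/
theorem stmt5 (n : ℕ) (hn : 1 ≤ n) (w wc : Fin n → Fin n → EReal)
    (hw : EntriesInMinusOneZeroOneTop w)
    (hc : IsCanonical w wc) (hdc : ∀ p q : Fin n, dist wc p q = dist w p q)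
    (i j : Fin n) (hfin : dist wc i j ≠ ⊤ ∧ dist wc i j ≠ ⊥) :
    (⨅ k : Fin n, max (halve (dist wc i k)) (if wc k j = -1 then (⊥ : EReal) else ⊤))
        = halve (dist wc i j) ↔
      ((∃ m : ℤ, dist wc i j = (((2*m+1 : ℤ) : ℝ) : EReal)) ∧
        ∃ ℓ, ∃ p : Fin (ℓ+2) → Fin n, IsShortestWalk wc i j (ℓ+1) p ∧
          wc (p (Fin.last ℓ).castSucc) (p (Fin.last (ℓ+1))) = -1) := by
  obtain ⟨hT, hB⟩ := hfin
  have hwc : EntriesInMinusOneZeroOneTop wc := hc.1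
  obtain ⟨z, hz, -⟩ := dist_attained hwc hT hB
  set f : Fin n → EReal :=
    fun k => max (halve (dist wc i k)) (if wc k j = -1 then (⊥ : EReal) else ⊤) with hf
  -- lower bound
  have hlow : ∀ k, halve (dist wc i j) ≤ f k := by
    intro k
    by_cases he : wc k j = -1
    · have hfk : f k = halve (dist wc i k) := by simp [hf, he]
      rw [hfk]
      obtain ⟨hnb, hfin'⟩ := dist_lower hwc hz he
      by_cases ht : dist wc i k = ⊤
      · rw [ht, halve_top]; exact le_top
      · obtain ⟨y, hy, hzy⟩ := hfin' ht
        rw [hy, hz, halve_coe, halve_coe]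
        exact_mod_cast ceil_half_mono (by omega : z ≤ y)
    · have hfk : f k = ⊤ := by simp [hf, he]
      rw [hfk]; exact le_top
  constructor
  · -- forward direction
    intro hL
    have : Nonempty (Fin n) := Fin.pos_iff_nonempty.mp hn
    obtain ⟨k₀, hk₀⟩ := Finite.exists_min f
    have hmin : f k₀ = halve (dist wc i j) := by
      rw [← hL]
      exact le_antisymm (le_iInf hk₀) (iInf_le f k₀)
    by_cases he : wc k₀ j = -1
    swap
    · exfalso
      have hfk : f k₀ = ⊤ := by simp [hf, he]
      rw [hfk, hz, halve_coe] at hmin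
      exact (EReal.coe_ne_top _) hmin.symm
    have hm' : halve (dist wc i k₀) = halve (dist wc i j) := by
      have hfk : f k₀ = halve (dist wc i k₀) := by simp [hf, he]
      rw [← hfk, hmin]
    obtain ⟨hnb, hfin'⟩ := dist_lower hwc hz he
    have ht : dist wc i k₀ ≠ ⊤ := by
      intro h
      rw [h, halve_top, hz, halve_coe] at hm'
      exact (EReal.coe_ne_top _) hm'.symm
    obtain ⟨y, hy, hzy⟩ := hfin' ht
    rw [hy, hz, halve_coe, halve_coe] at hm'
    have hceil : ⌈(y:ℝ)/2⌉ = ⌈(z:ℝ)/2⌉ := by exact_mod_cast hm'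
    -- z is odd
    rcases Int.even_or_odd z with ⟨m, hmz⟩ | ⟨m, hmz⟩
    · exfalso
      have h1 : ⌈((2*m+1:ℤ):ℝ)/2⌉ ≤ ⌈((y:ℤ):ℝ)/2⌉ := ceil_half_mono (by omega)
      rw [ceil_half_odd, hceil, show z = 2*m by omega, ceil_half_even] at h1
      omega
    · -- z = 2*m+1
      have hy2 : y = 2*m+2 := by
        by_contra hne
        have h1 : ⌈((2*(m+1)+1:ℤ):ℝ)/2⌉ ≤ ⌈((y:ℤ):ℝ)/2⌉ := ceil_half_mono (by omega)
        rw [ceil_half_odd, hceil, hmz, ceil_half_odd] at h1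
        omega
      refine ⟨⟨m, by rw [hz, hmz]⟩, ?_⟩
      obtain ⟨y', hy', ℓ, p, hp, hwp⟩ := dist_attained hwc ht hnb
      have hyy : y' = y := by
        rw [hy] at hy'
        exact_mod_cast hy'.symm
      subst hyy
      obtain ⟨hq, hqw, hqk⟩ := extend_walk hp (by rw [he]; exact neg_one_ne_top)
      refine ⟨ℓ, Fin.snoc p j, ⟨hq, ?_⟩, ?_⟩
      · rw [hqw, hwp, he, ereal_coe_add_neg_one, hz,
          show y' - 1 = z by omega]
      · rw [hqk, Fin.snoc_last]
        exact he
  · -- backward direction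
    rintro ⟨⟨m, hm⟩, ℓ, p, ⟨hpw, hpd⟩, hlast⟩
    set k : Fin n := p (Fin.last ℓ).castSucc with hk
    have hkj : wc k j = -1 := by
      rw [hk, ← hpw.2.1]
      exact hlast
    obtain ⟨hpre, hsplit⟩ := prefix_walk hpw
    obtain ⟨y, hy⟩ := exists_int_weight hwc hpre
    have hval : (((2*m+1:ℤ):ℝ):EReal) = (((y - 1:ℤ):ℝ):EReal) := by
      rw [← hm, ← hpd, hsplit, hlast, hy, ereal_coe_add_neg_one]
    have hy2 : y = 2*m+2 := by
      have : (2*m+1 : ℤ) = y - 1 := by exact_mod_cast hval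
      omega
    have hdik : dist wc i k ≤ (((2*m+2:ℤ):ℝ):EReal) := by
      have h1 := dist_le_walk wc hpre
      rwa [hy, hy2] at h1
    have hupper : f k ≤ halve (dist wc i j) := by
      have hfk : f k = halve (dist wc i k) := by simp [hf, hkj]
      rw [hfk, hm, halve_coe]
      by_cases hbot : dist wc i k = ⊥
      · rw [hbot, halve_bot]; exact bot_le
      · have htop : dist wc i k ≠ ⊤ := by
          intro h
          rw [h] at hdik
          exact (EReal.coe_ne_top _) (top_le_iff.mp hdik)
        obtain ⟨y', hy', -⟩ := dist_attained hwc htop hbot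
        rw [hy', halve_coe]
        have hle : y' ≤ 2*m+2 := by
          rw [hy'] at hdik
          exact_mod_cast hdik
        have h1 : ⌈((y':ℤ):ℝ)/2⌉ ≤ ⌈((2*(m+1):ℤ):ℝ)/2⌉ := ceil_half_mono (by omega)
        rw [ceil_half_even] at h1
        have h2 : ⌈((2*m+1:ℤ):ℝ)/2⌉ = m+1 := ceil_half_odd m
        exact_mod_cast h2 ▸ (by exact_mod_cast h1 : (⌈((y':ℤ):ℝ)/2⌉:ℤ) ≤ m+1)
    exact le_antisymm (le_trans (iInf_le f k) hupper) (le_iInf hlow)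

end MinMaxAPSP
end

section
/- Let n ≥ 1, let w : Fin n → Fin n → EReal have all entries in {−1, 0, 1, ⊤}, and let w_c be a canonical graph of w with d_{w_c}(p,q) = d_w(p,q) for all p,q; write d = d_{w_c} and t*(p,q) = halve(d(p,q)). Fix i, j with d(i,j) finite (an integer). Then d(i,j) is odd if and only if min over k ∈ Fin n of max(t*(i,k), x⁺(k,j)) equals t*(i,j) − 1, or min over k ∈ Fin n of max(t*(i,k), x⁻(k,j)) equals t*(i,j). -/
open scoped BigOperators

namespace MinMaxAPSP

/-!
Distances in the canonical graph are integers, and every `k` with `w_c(k,j) = c` satisfies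
`d(i,k) ≥ d(i,j) - c`; as `halve` is monotone, the min-max product over such `k` is at least
`halve (d(i,j) - c)`. For even `d(i,j) = 2m` this bound is `m` for `c = 1` and `m + 1` for
`c = -1`, too large for either equality. For odd `d(i,j)` the canonical property yields a
shortest walk from `i` to `j` whose last edge `(k,j)` has weight `c = ±1`, so
`d(i,k) = d(i,j) - c` and `k` attains the bound, which is `t*(i,j) - 1` for `c = 1` and
`t*(i,j)` for `c = -1`.
-/

section Walks

variable {n : ℕ} {w : Fin n → Fin n → EReal} {i j k : Fin n} {ℓ : ℕ}

lemma walkWeight_succ (p : Fin (ℓ + 2) → Fin n) :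
    walkWeight w (ℓ + 1) p
      = walkWeight w ℓ (Fin.init p) + w (p (Fin.last ℓ).castSucc) (p (Fin.last (ℓ + 1))) := by
  rw [walkWeight, Fin.sum_univ_castSucc]
  rfl

lemma IsWalk.init {p : Fin (ℓ + 2) → Fin n} (hp : IsWalk w i j (ℓ + 1) p) :
    IsWalk w i (p (Fin.last ℓ).castSucc) ℓ (Fin.init p) := by
  obtain ⟨h0, -, he⟩ := hp
  refine ⟨h0, rfl, fun m => ?_⟩
  simpa only [Fin.init, Fin.succ_castSucc] using he m.castSucc

lemma IsWalk.snoc {p : Fin (ℓ + 1) → Fin n} (hp : IsWalk w i k ℓ p) (hkj : w k j ≠ ⊤) :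
    IsWalk w i j (ℓ + 1) (Fin.snoc p j) := by
  obtain ⟨h0, hk, he⟩ := hp
  refine ⟨(Fin.snoc_castSucc (α := fun _ => Fin n) (i := 0) ..).trans h0, Fin.snoc_last _ _,
    fun m => ?_⟩
  induction m using Fin.lastCases with
  | last => rwa [Fin.succ_last, Fin.snoc_last, Fin.snoc_castSucc, hk]
  | cast m => rw [Fin.succ_castSucc, Fin.snoc_castSucc, Fin.snoc_castSucc]; exact he m

lemma IsWalk.lastEdge_ne_top {p : Fin (ℓ + 2) → Fin n} (hp : IsWalk w i j (ℓ + 1) p) :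
    w (p (Fin.last ℓ).castSucc) j ≠ ⊤ := by
  simpa only [Fin.succ_last, hp.2.1] using hp.2.2 (Fin.last ℓ)

lemma walkWeight_snoc (p : Fin (ℓ + 1) → Fin n) (j : Fin n) :
    walkWeight w (ℓ + 1) (Fin.snoc p j) = walkWeight w ℓ p + w (p (Fin.last ℓ)) j := by
  rw [walkWeight_succ, Fin.init_snoc, Fin.snoc_castSucc, Fin.snoc_last]

lemma dist_le_walkWeight {p : Fin (ℓ + 1) → Fin n} (hp : IsWalk w i j ℓ p) :
    dist w i j ≤ walkWeight w ℓ p :=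
  sInf_le ⟨ℓ, p, hp, rfl⟩

lemma dist_sub_le_dist {c : ℝ} (hkj : w k j = c) : dist w i j - c ≤ dist w i k := by
  refine le_sInf ?_
  rintro x ⟨ℓ, p, hp, rfl⟩
  refine EReal.sub_le_of_le_add ?_
  have hkj' : w (p (Fin.last ℓ)) j = c := hp.2.1 ▸ hkj
  calc dist w i j ≤ walkWeight w (ℓ + 1) (Fin.snoc p j) :=
        dist_le_walkWeight (hp.snoc (by simp [hkj]))
    _ = walkWeight w ℓ p + c := by rw [walkWeight_snoc, hkj']

lemma IsShortestWalk.dist_penultimate {p : Fin (ℓ + 2) → Fin n}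
    (hp : IsShortestWalk w i j (ℓ + 1) p) {c : ℝ} (hc : w (p (Fin.last ℓ).castSucc) j = c) :
    dist w i (p (Fin.last ℓ).castSucc) = dist w i j - c := by
  refine le_antisymm ?_ (dist_sub_le_dist hc)
  calc dist w i (p (Fin.last ℓ).castSucc) ≤ walkWeight w ℓ (Fin.init p) :=
        dist_le_walkWeight hp.1.init
    _ = walkWeight w (ℓ + 1) p - c := by
        rw [walkWeight_succ, hp.1.2.1, hc, EReal.add_sub_cancel_right]
    _ = dist w i j - c := by rw [hp.2]

end Walks

section IntegerWeights

def HasIntWeights {n : ℕ} (w : Fin n → Fin n → EReal) : Prop :=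
  ∀ a b, w a b ≠ ⊤ → ∃ z : ℤ, w a b = ((z : ℝ) : EReal)

variable {n : ℕ} {w : Fin n → Fin n → EReal} {i j : Fin n}

lemma EntriesInMinusOneZeroOneTop.hasIntWeights (hw : EntriesInMinusOneZeroOneTop w) :
    HasIntWeights w := by
  intro a b hab
  rcases hw a b with h | h | h | h
  · exact ⟨-1, by simp [h]⟩
  · exact ⟨0, by simp [h]⟩
  · exact ⟨1, by simp [h]⟩
  · exact absurd h hab

lemma walkWeight_exists_intCast (hw : HasIntWeights w) {ℓ : ℕ} {p : Fin (ℓ + 1) → Fin n}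
    (hp : IsWalk w i j ℓ p) :
    ∃ z : ℤ, walkWeight w ℓ p = ((z : ℝ) : EReal) := by
  refine Finset.sum_induction _ (fun x : EReal => ∃ z : ℤ, x = ((z : ℝ) : EReal))
    ?_ ⟨0, by simp⟩ fun k _ => hw _ _ (hp.2.2 k)
  rintro _ _ ⟨a, rfl⟩ ⟨b, rfl⟩
  exact ⟨a + b, by push_cast; rfl⟩

/-- The walk weights are integers bounded below by the distance, so a least one exists. -/
lemma exists_isShortestWalk (hw : HasIntWeights w)
    (htop : dist w i j ≠ ⊤) (hbot : dist w i j ≠ ⊥) :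
    ∃ ℓ, ∃ p : Fin (ℓ + 1) → Fin n, IsShortestWalk w i j ℓ p := by
  classical
  let P : ℤ → Prop := fun z =>
    ∃ ℓ, ∃ p : Fin (ℓ + 1) → Fin n,
      IsWalk w i j ℓ p ∧ walkWeight w ℓ p = ((z : ℝ) : EReal)
  have hbdd : ∃ b : ℤ, ∀ z, P z → b ≤ z := by
    refine ⟨⌈(dist w i j).toReal⌉, fun z ⟨ℓ, p, hp, hz⟩ => Int.ceil_le.mpr ?_⟩
    rw [← EReal.coe_le_coe_iff, EReal.coe_toReal htop hbot, ← hz]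
    exact dist_le_walkWeight hp
  have hinh : ∃ z, P z := by
    obtain ⟨_, ⟨ℓ, p, hp, rfl⟩, -⟩ := sInf_lt_iff.mp (lt_top_iff_ne_top.mpr htop)
    obtain ⟨z, hz⟩ := walkWeight_exists_intCast hw hp
    exact ⟨z, ℓ, p, hp, hz⟩
  obtain ⟨z, ⟨ℓ, p, hp, hz⟩, hmin⟩ := Int.exists_least_of_bdd hbdd hinh
  refine ⟨ℓ, p, hp, le_antisymm ?_ (hz ▸ dist_le_walkWeight hp)⟩
  rw [hz]
  refine le_sInf ?_
  rintro _ ⟨ℓ', p', hp', rfl⟩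
  obtain ⟨z', hz'⟩ := walkWeight_exists_intCast hw hp'
  rw [hz', EReal.coe_le_coe_iff, Int.cast_le]
  exact hmin z' ⟨ℓ', p', hp', hz'⟩

lemma dist_exists_intCast (hw : HasIntWeights w)
    (htop : dist w i j ≠ ⊤) (hbot : dist w i j ≠ ⊥) :
    ∃ z : ℤ, dist w i j = ((z : ℝ) : EReal) := by
  obtain ⟨ℓ, p, hp, hd⟩ := exists_isShortestWalk hw htop hbot
  obtain ⟨z, hz⟩ := walkWeight_exists_intCast hw hp
  exact ⟨z, hd ▸ hz⟩

end IntegerWeights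

lemma halve_intCast (z : ℤ) :
    halve ((z : ℝ) : EReal) = ((((z + 1) / 2 : ℤ) : ℝ) : EReal) := by
  rw [halve, if_neg (EReal.coe_ne_top _), if_neg (EReal.coe_ne_bot _), EReal.toReal_coe]
  congr 2
  rw [Int.ceil_eq_iff]
  have h₁ : (z : ℝ) ≤ 2 * (((z + 1) / 2 : ℤ) : ℝ) := by
    exact_mod_cast (by omega : z ≤ 2 * ((z + 1) / 2))
  have h₂ : 2 * (((z + 1) / 2 : ℤ) : ℝ) ≤ z + 1 := by
    exact_mod_cast (by omega : 2 * ((z + 1) / 2) ≤ z + 1)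
  constructor <;> linarith

lemma halve_mono {x y : EReal} (h : x ≤ y) : halve x ≤ halve y := by
  by_cases hy : y = ⊤
  · simp [halve, hy]
  by_cases hx : x = ⊥
  · simp [halve, hx]
  have hx' : x ≠ ⊤ := ne_top_of_le_ne_top hy h
  have hy' : y ≠ ⊥ := ne_bot_of_le_ne_bot hx h
  rw [halve, if_neg hx', if_neg hx, halve, if_neg hy, if_neg hy', EReal.coe_le_coe_iff,
    Int.cast_le]
  gcongr
  exact EReal.toReal_le_toReal h hx hy

lemma halve_sub_one_of_odd (m : ℤ) :
    halve ((((2 * m + 1 : ℤ) : ℝ) : EReal) - ((1 : ℝ) : EReal))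
      = halve (((2 * m + 1 : ℤ) : ℝ) : EReal) - 1 := by
  rw [← EReal.coe_sub, ← Int.cast_one (R := ℝ), ← Int.cast_sub, halve_intCast,
    halve_intCast, ← EReal.coe_one, ← EReal.coe_sub]
  norm_cast
  omega

lemma halve_sub_neg_one_of_odd (m : ℤ) :
    halve ((((2 * m + 1 : ℤ) : ℝ) : EReal) - ((-1 : ℝ) : EReal))
      = halve (((2 * m + 1 : ℤ) : ℝ) : EReal) := by
  rw [← EReal.coe_sub, ← Int.cast_one (R := ℝ), ← Int.cast_neg, ← Int.cast_sub,
    halve_intCast, halve_intCast]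
  norm_cast
  omega

lemma halve_sub_one_lt_of_even (m : ℤ) :
    halve (((2 * m : ℤ) : ℝ) : EReal) - 1
      < halve ((((2 * m : ℤ) : ℝ) : EReal) - ((1 : ℝ) : EReal)) := by
  rw [← EReal.coe_sub, ← Int.cast_one (R := ℝ), ← Int.cast_sub, halve_intCast,
    halve_intCast, ← EReal.coe_one, ← EReal.coe_sub]
  norm_cast
  omega

lemma halve_lt_sub_neg_one_of_even (m : ℤ) :
    halve (((2 * m : ℤ) : ℝ) : EReal)
      < halve ((((2 * m : ℤ) : ℝ) : EReal) - ((-1 : ℝ) : EReal)) := by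
  rw [← EReal.coe_sub, ← Int.cast_one (R := ℝ), ← Int.cast_neg, ← Int.cast_sub,
    halve_intCast, halve_intCast]
  norm_cast
  omega

section MinMaxProduct

variable {n : ℕ} {w : Fin n → Fin n → EReal} {i j : Fin n}

lemma halve_dist_sub_le_iInf (c : ℝ) :
    halve (dist w i j - c)
      ≤ ⨅ k : Fin n, max (halve (dist w i k)) (if w k j = c then (⊥ : EReal) else ⊤) := by
  refine le_iInf fun k => ?_
  split_ifs with hk
  · exact le_max_of_le_left (halve_mono (dist_sub_le_dist hk))
  · simp

lemma iInf_eq_halve_dist_sub {c : ℝ} {k : Fin n} (hk : w k j = c)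
    (hdk : dist w i k = dist w i j - c) :
    ⨅ k : Fin n, max (halve (dist w i k)) (if w k j = c then (⊥ : EReal) else ⊤)
      = halve (dist w i j - c) :=
  le_antisymm (iInf_le_of_le k (by simp [hk, hdk])) (halve_dist_sub_le_iInf c)

end MinMaxProduct

lemma IsCanonical.exists_isShortestWalk_lastEdge_ne_zero {n : ℕ}
    {w wc : Fin n → Fin n → EReal} (hc : IsCanonical w wc) (hw : HasIntWeights w)
    {i j : Fin n} (hdc : dist wc i j = dist w i j) (htop : dist w i j ≠ ⊤)
    (hbot : dist w i j ≠ ⊥) (hzero : dist w i j ≠ 0) :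
    ∃ ℓ, ∃ p : Fin (ℓ + 2) → Fin n,
      IsShortestWalk wc i j (ℓ + 1) p ∧ wc (p (Fin.last ℓ).castSucc) j ≠ 0 := by
  obtain ⟨ℓ, p, hp⟩ := exists_isShortestWalk hw htop hbot
  obtain ⟨ℓ', -, p', hp', -, hform⟩ := hc.2 i j ℓ p hp
  have hweight : walkWeight wc ℓ' p' ≠ 0 := by rwa [hp'.2, hdc]
  cases ℓ' with
  | zero => exact absurd (by simp [walkWeight]) hweight
  | succ ℓ' =>
    refine ⟨ℓ', p', hp', ?_⟩
    rcases hform with hone | hnonzero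
    · obtain rfl : ℓ' = 0 := by omega
      have hj : p' 1 = j := hp'.1.2.1
      simpa [walkWeight, hj] using hweight
    · simpa only [Fin.succ_last, hp'.1.2.1] using hnonzero (Fin.last ℓ')

theorem stmt7_general (n : ℕ) (w wc : Fin n → Fin n → EReal)
    (hw : EntriesInMinusOneZeroOneTop w)
    (hc : IsCanonical w wc) (hdc : ∀ p q : Fin n, dist wc p q = dist w p q)
    (i j : Fin n) (hfin : dist wc i j ≠ ⊤ ∧ dist wc i j ≠ ⊥) :
    (∃ m : ℤ, dist wc i j = (((2*m+1 : ℤ) : ℝ) : EReal)) ↔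
      ((⨅ k : Fin n, max (halve (dist wc i k)) (if wc k j = 1 then (⊥ : EReal) else ⊤))
          = halve (dist wc i j) - 1 ∨
        (⨅ k : Fin n, max (halve (dist wc i k)) (if wc k j = -1 then (⊥ : EReal) else ⊤))
          = halve (dist wc i j)) := by
  obtain ⟨D, hD⟩ := dist_exists_intCast hc.1.hasIntWeights hfin.1 hfin.2
  rcases Int.even_or_odd' D with ⟨m, rfl | rfl⟩
  · refine iff_of_false (fun ⟨m', hm'⟩ => ?_) ?_
    · rw [hD, EReal.coe_eq_coe_iff, Int.cast_inj] at hm'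
      omega
    rintro (hplus | hminus)
    · have hle := (halve_dist_sub_le_iInf (c := 1)).trans_eq hplus
      rw [hD] at hle
      exact (halve_sub_one_lt_of_even m).not_ge hle
    · have hle := (halve_dist_sub_le_iInf (c := -1)).trans_eq hminus
      rw [hD] at hle
      exact (halve_lt_sub_neg_one_of_even m).not_ge hle
  · refine iff_of_true ⟨m, hD⟩ ?_
    obtain ⟨ℓ, p, hp, hne⟩ := hc.exists_isShortestWalk_lastEdge_ne_zero hw.hasIntWeights
      (hdc i j) (hdc i j ▸ hfin.1) (hdc i j ▸ hfin.2) (by rw [← hdc, hD]; norm_cast; omega)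
    rcases hc.1 (p (Fin.last ℓ).castSucc) j with h | h | h | h
    · right
      refine (iInf_eq_halve_dist_sub (c := -1) h (hp.dist_penultimate h)).trans ?_
      rw [hD]
      exact halve_sub_neg_one_of_odd m
    · exact absurd h hne
    · left
      refine (iInf_eq_halve_dist_sub (c := 1) h (hp.dist_penultimate h)).trans ?_
      rw [hD]
      exact halve_sub_one_of_odd m
    · exact absurd h hp.1.lastEdge_ne_top

/-- parity characterization via the two target-(min,max)-products. -/
theorem stmt7 (n : ℕ) (hn : 1 ≤ n) (w wc : Fin n → Fin n → EReal)
    (hw : EntriesInMinusOneZeroOneTop w)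
    (hc : IsCanonical w wc) (hdc : ∀ p q : Fin n, dist wc p q = dist w p q)
    (i j : Fin n) (hfin : dist wc i j ≠ ⊤ ∧ dist wc i j ≠ ⊥) :
    (∃ m : ℤ, dist wc i j = (((2*m+1 : ℤ) : ℝ) : EReal)) ↔
      ((⨅ k : Fin n, max (halve (dist wc i k)) (if wc k j = 1 then (⊥ : EReal) else ⊤))
          = halve (dist wc i j) - 1 ∨
        (⨅ k : Fin n, max (halve (dist wc i k)) (if wc k j = -1 then (⊥ : EReal) else ⊤))
          = halve (dist wc i j)) :=
  stmt7_general n w wc hw hc hdc i j hfin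

end MinMaxAPSP
end
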